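/- Let m ≥ 0, t > 0, and define p_t(s) = (t e^{tm} / √(2π s³)) · exp(−(t²/s + m² s)/2) for s > 0, and for x ∈ ℝ³ set P_t(x) = ∫₀^∞ (2π s)^{−3/2} exp(−|x|²/(2s)) p_t(s) ds. Then for every ξ ∈ ℝ³, ∫_{ℝ³} e^{i ξ·x} P_t(x) dx = exp(−t(√(|ξ|² + m²) − m)). -/

import Mathlib

open MeasureTheory
open scoped RealInnerProductSpace

/-- The density of the relativistic `1/2`-stable subordinator with mass parameter `m`
at time `t`, evaluated at `s > 0`. -/
noncomputable def relSubordinatorDensity (m t s : ℝ) : ℝ :=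
  t * Real.exp (t * m) / Real.sqrt (2 * Real.pi * s ^ 3) *
    Real.exp (-(t ^ 2 / s + m ^ 2 * s) / 2)

/-- The density `P_t(x) = ∫₀^∞ (2πs)^{−3/2} e^{−|x|²/(2s)} p_t(s) ds` of the
subordinated three-dimensional Gaussian. -/
noncomputable def subordinatedGaussianDensity (m t : ℝ) (x : EuclideanSpace ℝ (Fin 3)) : ℝ :=
  ∫ s in Set.Ioi (0 : ℝ),
    (2 * Real.pi * s) ^ (-(3 / 2 : ℝ)) * Real.exp (-‖x‖ ^ 2 / (2 * s)) *
      relSubordinatorDensity m t s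

/-!
Conditionally on the subordinator, `P_t` is a mixture of centred Gaussians of variance `s`, whose
characteristic function is `exp (-s |ξ|² / 2)`; by Fubini the left-hand side is the Laplace
transform `∫ p_t(s) exp (-s |ξ|² / 2) ds`. The substitution `s = t² / u²` turns
`∫ p_t(s) e^{-r s} ds` into `(2 / √(2π)) e^{-t (c - m)} ∫₀^∞ exp (-(u - t c / u)² / 2) du` with
`c = √(2 r + m²)`, and the Cauchy–Schlömilch substitution `x ↦ x - b / x`, combined with the
involution `x ↦ b / x`, gives `∫₀^∞ exp (-(x - b / x)² / 2) dx = √(2π) / 2` for every `b ≥ 0`.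
-/

open Real Set

section CauchySchlomilch

variable {E : Type*} [NormedAddCommGroup E] [NormedSpace ℝ E] {b : ℝ}

theorem hasDerivWithinAt_sub_div (b : ℝ) :
    ∀ x ∈ Ioi (0 : ℝ), HasDerivWithinAt (fun x => x - b / x) (1 + b / x ^ 2) (Ioi 0) x :=
  fun x (hx : 0 < x) => (((hasDerivAt_id x).sub ((hasDerivAt_const x b).div (hasDerivAt_id x)
    hx.ne')).congr_deriv (by simp only [id]; field_simp; ring)).hasDerivWithinAt

theorem strictMonoOn_sub_div (hb : 0 ≤ b) : StrictMonoOn (fun x => x - b / x) (Ioi 0) :=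
  fun x hx _ _ hxy => by
    simp only
    linarith [div_le_div_of_nonneg_left hb hx hxy.le]

theorem image_sub_div_Ioi (hb : 0 < b) : (fun x => x - b / x) '' Ioi 0 = univ := by
  refine eq_univ_of_forall fun y => ?_
  have hd : √(y ^ 2 + 4 * b) ^ 2 = y ^ 2 + 4 * b := sq_sqrt (by positivity)
  have hy : |y| < √(y ^ 2 + 4 * b) := by
    rw [← sqrt_sq_eq_abs]; exact sqrt_lt_sqrt (sq_nonneg y) (by linarith)
  -- the positive root of `x ^ 2 - y * x - b`
  set x := (y + √(y ^ 2 + 4 * b)) / 2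
  have hx : 0 < x := by have := neg_abs_le y; simp only [x]; linarith
  refine ⟨x, hx, ?_⟩
  have hroot : x * x = y * x + b := by simp only [x]; linear_combination hd / 4
  field_simp
  linarith

theorem integrableOn_one_add_div_sq_smul_comp_sub_div_iff (hb : 0 < b) (g : ℝ → E) :
    IntegrableOn (fun x => (1 + b / x ^ 2) • g (x - b / x)) (Ioi 0) ↔ Integrable g := by
  rw [← integrableOn_univ, ← image_sub_div_Ioi hb,
    integrableOn_image_iff_integrableOn_abs_deriv_smul measurableSet_Ioi
      (hasDerivWithinAt_sub_div b) (strictMonoOn_sub_div hb.le).injOn]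
  exact integrableOn_congr_fun (fun x (hx : 0 < x) => by rw [abs_of_pos (by positivity)])
    measurableSet_Ioi

theorem integral_one_add_div_sq_smul_comp_sub_div (hb : 0 < b) (g : ℝ → E) :
    ∫ x in Ioi 0, (1 + b / x ^ 2) • g (x - b / x) = ∫ y, g y := by
  rw [← setIntegral_univ (f := g), ← image_sub_div_Ioi hb,
    integral_image_eq_integral_abs_deriv_smul measurableSet_Ioi
      (hasDerivWithinAt_sub_div b) (strictMonoOn_sub_div hb.le).injOn]
  exact setIntegral_congr_fun measurableSet_Ioi fun x (hx : 0 < x) => by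
    rw [abs_of_pos (by positivity)]

theorem integrableOn_comp_sub_div_Ioi {g : ℝ → E} (hg : Integrable g) (hb : 0 ≤ b) :
    IntegrableOn (fun x => g (x - b / x)) (Ioi 0) := by
  rcases hb.eq_or_lt with rfl | hb
  · simpa using hg.integrableOn
  have hweighted := (integrableOn_one_add_div_sq_smul_comp_sub_div_iff hb g).2 hg
  have hweight : Measurable fun x : ℝ => (1 + b / x ^ 2)⁻¹ := by fun_prop
  refine IntegrableOn.congr_fun (hweighted.bdd_smul 1 hweight.aestronglyMeasurable ?_)
    (fun x (hx : 0 < x) => inv_smul_smul₀ (by positivity) _) measurableSet_Ioi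
  filter_upwards [ae_restrict_mem measurableSet_Ioi] with x (hx : 0 < x)
  rw [norm_inv, norm_of_nonneg (by positivity)]
  exact inv_le_one_of_one_le₀ (le_add_of_nonneg_right (by positivity))

theorem strictAntiOn_div (hb : 0 < b) : StrictAntiOn (fun x => b / x) (Ioi 0) :=
  fun _ hx _ _ hxy => div_lt_div_of_pos_left hb hx hxy

theorem image_div_Ioi (hb : 0 < b) : (fun x => b / x) '' Ioi 0 = Ioi 0 :=
  Subset.antisymm (image_subset_iff.2 fun _ hx => div_pos hb hx)
    fun y hy => ⟨b / y, div_pos hb hy, div_div_cancel₀ hb.ne'⟩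

theorem hasDerivWithinAt_div (b : ℝ) :
    ∀ x ∈ Ioi (0 : ℝ), HasDerivWithinAt (fun x => b / x) (-(b / x ^ 2)) (Ioi 0) x :=
  fun x (hx : 0 < x) => (((hasDerivAt_const x b).div (hasDerivAt_id x) hx.ne').congr_deriv
    (by simp only [id]; ring)).hasDerivWithinAt

/-- The involution `x ↦ b / x` of `Ioi 0` turns `x - b / x` into its negative. -/
theorem integral_comp_sub_div_Ioi_eq_integral_div_sq_mul {g : ℝ → ℝ} (heven : Function.Even g)
    (hb : 0 < b) :
    ∫ x in Ioi 0, g (x - b / x) = ∫ x in Ioi 0, b / x ^ 2 * g (x - b / x) := by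
  conv_lhs => rw [← image_div_Ioi hb]
  rw [integral_image_eq_integral_abs_deriv_smul measurableSet_Ioi (hasDerivWithinAt_div b)
    (strictAntiOn_div hb).injOn]
  refine setIntegral_congr_fun measurableSet_Ioi fun x (hx : 0 < x) => ?_
  rw [smul_eq_mul, abs_neg, abs_of_pos (by positivity), div_div_cancel₀ hb.ne', ← heven, neg_sub]

theorem integral_comp_sub_div_Ioi_of_even {g : ℝ → ℝ} (hg : Integrable g)
    (heven : Function.Even g) (hb : 0 ≤ b) :
    ∫ x in Ioi 0, g (x - b / x) = (∫ y, g y) / 2 := by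
  rcases hb.eq_or_lt with rfl | hb
  · have habs : ∀ x, g |x| = g x := fun x => by
      rcases abs_choice x with h | h <;> rw [h]
      exact heven x
    have hdouble := integral_comp_abs (f := g)
    simp only [habs] at hdouble
    simp only [zero_div, sub_zero]
    linarith
  have hint := integrableOn_comp_sub_div_Ioi hg hb.le
  have hweighted := (integrableOn_one_add_div_sq_smul_comp_sub_div_iff hb g).2 hg
  have hsplit : ∫ y, g y = (∫ x in Ioi 0, g (x - b / x)) +
      ∫ x in Ioi 0, b / x ^ 2 * g (x - b / x) := by
    rw [← integral_one_add_div_sq_smul_comp_sub_div hb, ← integral_add hint]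
    · simp only [smul_eq_mul, add_mul, one_mul]
    · exact (hweighted.sub hint).congr_fun
        (fun x _ => by simp only [Pi.sub_apply, smul_eq_mul]; ring) measurableSet_Ioi
  rw [hsplit, ← integral_comp_sub_div_Ioi_eq_integral_div_sq_mul heven hb]
  ring

end CauchySchlomilch

theorem integrable_exp_neg_sq_div_two : Integrable fun y : ℝ => exp (-y ^ 2 / 2) := by
  simpa [neg_div, div_eq_inv_mul] using integrable_exp_neg_mul_sq (b := 1 / 2) (by norm_num)

theorem integral_exp_neg_sq_div_two : ∫ y : ℝ, exp (-y ^ 2 / 2) = √(2 * π) := by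
  simpa [neg_div, div_eq_inv_mul] using integral_gaussian (1 / 2)

section Laplace

variable {t : ℝ}

theorem hasDerivWithinAt_sq_div_sq (t : ℝ) : ∀ u ∈ Ioi (0 : ℝ),
    HasDerivWithinAt (fun u => t ^ 2 / u ^ 2) (-(2 * t ^ 2 / u ^ 3)) (Ioi 0) u :=
  fun u (hu : 0 < u) => by
    have hu : u ≠ 0 := hu.ne'
    exact (((hasDerivAt_const u (t ^ 2)).div (hasDerivAt_pow 2 u)
      (pow_ne_zero 2 hu)).congr_deriv (by field_simp; ring)).hasDerivWithinAt

theorem strictAntiOn_sq_div_sq (ht : t ≠ 0) : StrictAntiOn (fun u => t ^ 2 / u ^ 2) (Ioi 0) :=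
  fun u (hu : 0 < u) _ _ huv => div_lt_div_of_pos_left (by positivity) (by positivity)
    (pow_lt_pow_left₀ huv hu.le two_ne_zero)

theorem image_sq_div_sq_Ioi (ht : 0 < t) : (fun u => t ^ 2 / u ^ 2) '' Ioi 0 = Ioi 0 := by
  refine Subset.antisymm (image_subset_iff.2 fun u (hu : 0 < u) => by
    simp only [mem_preimage, mem_Ioi]; positivity)
    fun y (hy : 0 < y) => ⟨t / √y, div_pos ht (sqrt_pos.2 hy), ?_⟩
  simp only [div_pow, sq_sqrt hy.le]
  field_simp

theorem abs_deriv_mul_relSubordinatorDensity_mul_exp_comp (ht : 0 < t) {m r c u : ℝ}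
    (hc2 : c ^ 2 = 2 * r + m ^ 2) (hu : 0 < u) :
    |-(2 * t ^ 2 / u ^ 3)| *
        (relSubordinatorDensity m t (t ^ 2 / u ^ 2) * exp (-(r * (t ^ 2 / u ^ 2))))
      = 2 / √(2 * π) * exp (-(t * (c - m))) * exp (-(u - t * c / u) ^ 2 / 2) := by
  have hsqrt : √(2 * π * (t ^ 2 / u ^ 2) ^ 3) = √(2 * π) * (t ^ 3 / u ^ 3) := by
    rw [show 2 * π * (t ^ 2 / u ^ 2) ^ 3 = 2 * π * (t ^ 3 / u ^ 3) ^ 2 by ring,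
      sqrt_mul (by positivity), sqrt_sq (by positivity)]
  -- completing the square: `u ^ 2 + c ^ 2 t ^ 2 / u ^ 2 = (u - t c / u) ^ 2 + 2 t c`
  have hexp : exp (t * m) * exp (-(t ^ 2 / (t ^ 2 / u ^ 2) + m ^ 2 * (t ^ 2 / u ^ 2)) / 2) *
      exp (-(r * (t ^ 2 / u ^ 2))) = exp (-(t * (c - m))) * exp (-(u - t * c / u) ^ 2 / 2) := by
    simp only [← exp_add]
    congr 1
    field_simp
    linear_combination t ^ 2 * hc2
  have hsqrtπ : 0 < √(2 * π) := by positivity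
  rw [abs_neg, abs_of_pos (by positivity), relSubordinatorDensity, hsqrt, mul_assoc (2 / _),
    ← hexp]
  field_simp

theorem integrableOn_relSubordinatorDensity_mul_exp (ht : 0 < t) {m r : ℝ}
    (hr : 0 ≤ 2 * r + m ^ 2) :
    IntegrableOn (fun s => relSubordinatorDensity m t s * exp (-(r * s))) (Ioi 0) := by
  rw [← image_sq_div_sq_Ioi ht, integrableOn_image_iff_integrableOn_abs_deriv_smul
    measurableSet_Ioi (hasDerivWithinAt_sq_div_sq t) (strictAntiOn_sq_div_sq ht.ne').injOn]
  have hgauss := integrableOn_comp_sub_div_Ioi integrable_exp_neg_sq_div_two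
    (by positivity : 0 ≤ t * √(2 * r + m ^ 2))
  refine IntegrableOn.congr_fun
    (hgauss.const_mul (2 / √(2 * π) * exp (-(t * (√(2 * r + m ^ 2) - m)))))
    (fun u (hu : 0 < u) => ?_) measurableSet_Ioi
  rw [smul_eq_mul, abs_deriv_mul_relSubordinatorDensity_mul_exp_comp ht (sq_sqrt hr) hu]

theorem integral_relSubordinatorDensity_mul_exp (ht : 0 < t) {m r : ℝ}
    (hr : 0 ≤ 2 * r + m ^ 2) :
    ∫ s in Ioi 0, relSubordinatorDensity m t s * exp (-(r * s))
      = exp (-(t * (√(2 * r + m ^ 2) - m))) := by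
  rw [← image_sq_div_sq_Ioi ht, integral_image_eq_integral_abs_deriv_smul
    measurableSet_Ioi (hasDerivWithinAt_sq_div_sq t) (strictAntiOn_sq_div_sq ht.ne').injOn]
  rw [setIntegral_congr_fun measurableSet_Ioi (fun u (hu : 0 < u) => by
    rw [smul_eq_mul, abs_deriv_mul_relSubordinatorDensity_mul_exp_comp ht (sq_sqrt hr) hu]),
    integral_const_mul, integral_comp_sub_div_Ioi_of_even integrable_exp_neg_sq_div_two
    (fun y => by simp only [neg_sq]) (by positivity), integral_exp_neg_sq_div_two]
  field_simp

end Laplace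

section HeatKernel

variable {V : Type*} [NormedAddCommGroup V] [InnerProductSpace ℝ V] {s : ℝ}

noncomputable def heatKernel (s : ℝ) (x : V) : ℝ :=
  (2 * π * s) ^ (-(Module.finrank ℝ V / 2 : ℝ)) * exp (-‖x‖ ^ 2 / (2 * s))

theorem heatKernel_nonneg (hs : 0 ≤ s) (x : V) : 0 ≤ heatKernel s x := by
  unfold heatKernel; positivity

variable [MeasurableSpace V] [BorelSpace V]

theorem measurable_heatKernel_uncurry :
    Measurable fun p : V × ℝ => heatKernel p.2 p.1 := by
  unfold heatKernel; fun_prop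

variable [FiniteDimensional ℝ V]

theorem integral_heatKernel (hs : 0 < s) : ∫ x : V, heatKernel s x = 1 := by
  have hexp : ∀ x : V, exp (-‖x‖ ^ 2 / (2 * s)) = exp (-(2 * s)⁻¹ * ‖x‖ ^ 2) := fun x => by
    congr 1; ring
  simp only [heatKernel, hexp]
  rw [integral_const_mul, GaussianFourier.integral_rexp_neg_mul_sq_norm (by positivity),
    div_inv_eq_mul, rpow_neg (by positivity)]
  have : 0 < (2 * π * s) ^ (Module.finrank ℝ V / 2 : ℝ) := by positivity
  field_simp

theorem integrable_heatKernel (hs : 0 < s) : Integrable (heatKernel s : V → ℝ) :=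
  .of_integral_ne_zero (by rw [integral_heatKernel hs]; exact one_ne_zero)

theorem integral_cexp_inner_mul_heatKernel (hs : 0 < s) (ξ : V) :
    ∫ x : V, Complex.exp (Complex.I * (⟪ξ, x⟫ : ℝ)) * (heatKernel s x : ℂ)
      = (exp (-(‖ξ‖ ^ 2 / 2 * s)) : ℂ) := by
  have hs0 : (s : ℂ) ≠ 0 := Complex.ofReal_ne_zero.2 hs.ne'
  have hb : 0 < (((2 * s)⁻¹ : ℝ) : ℂ).re := by rw [Complex.ofReal_re]; positivity
  have hpt : ∀ x : V, Complex.exp (Complex.I * (⟪ξ, x⟫ : ℝ)) * (heatKernel s x : ℂ)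
      = ((2 * π * s) ^ (-(Module.finrank ℝ V / 2 : ℝ)) : ℝ) *
        Complex.exp (-(((2 * s)⁻¹ : ℝ) : ℂ) * ‖x‖ ^ 2 + Complex.I * ⟪ξ, x⟫) := fun x => by
    rw [heatKernel, Complex.exp_add, Complex.ofReal_mul, Complex.ofReal_exp]
    push_cast
    ring_nf
  simp only [hpt]
  rw [integral_const_mul, GaussianFourier.integral_cexp_neg_mul_sq_norm_add hb]
  have h2πs : 0 < 2 * π * s := by positivity
  have hπ : (π : ℂ) / (((2 * s)⁻¹ : ℝ) : ℂ) = ((2 * π * s : ℝ) : ℂ) := by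
    push_cast; field_simp
  have hquad : Complex.I ^ 2 * (‖ξ‖ : ℂ) ^ 2 / (4 * (((2 * s)⁻¹ : ℝ) : ℂ))
      = ((-(‖ξ‖ ^ 2 / 2 * s) : ℝ) : ℂ) := by
    push_cast; rw [Complex.I_sq]; field_simp; ring
  rw [hπ, hquad, show (Module.finrank ℝ V / 2 : ℂ) = ((Module.finrank ℝ V / 2 : ℝ) : ℂ) by
    push_cast; rfl, ← Complex.ofReal_cpow h2πs.le, ← Complex.ofReal_exp, ← Complex.ofReal_mul,
    ← Complex.ofReal_mul, ← mul_assoc, ← rpow_add h2πs, neg_add_cancel, rpow_zero, one_mul]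

theorem integral_cexp_inner_mul_integral_heatKernel_mul {q : ℝ → ℝ}
    (hq : IntegrableOn q (Ioi 0)) (ξ : V) :
    ∫ x : V, Complex.exp (Complex.I * (⟪ξ, x⟫ : ℝ)) *
        ((∫ s in Ioi 0, heatKernel s x * q s : ℝ) : ℂ)
      = ((∫ s in Ioi 0, q s * exp (-(‖ξ‖ ^ 2 / 2 * s)) : ℝ) : ℂ) := by
  set F : V → ℝ → ℂ := fun x s =>
    Complex.exp (Complex.I * (⟪ξ, x⟫ : ℝ)) * ((heatKernel s x * q s : ℝ) : ℂ)
  have hnorm : ∀ s ∈ Ioi (0 : ℝ), ∀ x, ‖F x s‖ = heatKernel s x * ‖q s‖ := fun s hs x => by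
    rw [norm_mul, Complex.norm_exp_I_mul_ofReal, Complex.norm_real, norm_mul,
      norm_of_nonneg (heatKernel_nonneg (le_of_lt hs) x), one_mul]
  have hmeas : AEStronglyMeasurable (Function.uncurry F)
      (volume.prod (volume.restrict (Ioi 0))) :=
    (by fun_prop : Continuous fun p : V × ℝ => Complex.exp (Complex.I * (⟪ξ, p.1⟫ : ℝ)))
      |>.aestronglyMeasurable.mul <| Complex.continuous_ofReal.comp_aestronglyMeasurable <|
      measurable_heatKernel_uncurry.aestronglyMeasurable.mul hq.aestronglyMeasurable.comp_snd
  have hint : Integrable (Function.uncurry F) (volume.prod (volume.restrict (Ioi 0))) := by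
    refine (integrable_prod_iff' hmeas).2 ⟨?_, hq.norm.congr ?_⟩
    · filter_upwards [ae_restrict_mem measurableSet_Ioi, hmeas.prodMk_right] with s hs hslice
      exact ((integrable_heatKernel hs).mul_const ‖q s‖).mono' hslice
        (ae_of_all _ fun x => (hnorm s hs x).le)
    · filter_upwards [ae_restrict_mem measurableSet_Ioi] with s (hs : 0 < s)
      simp only [Function.uncurry_apply_pair, hnorm s hs, integral_mul_const,
        integral_heatKernel hs, one_mul]
  have hinner : ∀ s ∈ Ioi (0 : ℝ), ∫ x, F x s = ((q s * exp (-(‖ξ‖ ^ 2 / 2 * s)) : ℝ) : ℂ) :=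
    fun s hs => by
      simp only [F, Complex.ofReal_mul, ← mul_assoc]
      rw [integral_mul_const, integral_cexp_inner_mul_heatKernel hs, mul_comm]
  calc ∫ x : V, Complex.exp (Complex.I * (⟪ξ, x⟫ : ℝ)) *
        ((∫ s in Ioi 0, heatKernel s x * q s : ℝ) : ℂ)
      = ∫ x, ∫ s in Ioi 0, F x s := by
        congr 1 with x
        rw [← integral_complex_ofReal, ← integral_const_mul]
    _ = ∫ s in Ioi 0, ∫ x, F x s := integral_integral_swap hint
    _ = _ := by rw [setIntegral_congr_fun measurableSet_Ioi hinner, integral_complex_ofReal]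

end HeatKernel

theorem characteristic_function_subordinated_gaussian_general (m t : ℝ) (ht : 0 < t)
    (ξ : EuclideanSpace ℝ (Fin 3)) :
    ∫ x : EuclideanSpace ℝ (Fin 3),
        Complex.exp (Complex.I * (⟪ξ, x⟫ : ℝ)) * (subordinatedGaussianDensity m t x : ℂ)
      = (Real.exp (-(t * (Real.sqrt (‖ξ‖ ^ 2 + m ^ 2) - m))) : ℂ) := by
  have hP : ∀ x, subordinatedGaussianDensity m t x =
      ∫ s in Ioi 0, heatKernel s x * relSubordinatorDensity m t s := fun x => by
    simp only [subordinatedGaussianDensity, heatKernel, finrank_euclideanSpace_fin]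
    norm_num
  have hp : IntegrableOn (relSubordinatorDensity m t) (Ioi 0) := by
    simpa using integrableOn_relSubordinatorDensity_mul_exp ht (r := 0) (by positivity)
  simp only [hP]
  rw [integral_cexp_inner_mul_integral_heatKernel_mul hp,
    integral_relSubordinatorDensity_mul_exp ht (by positivity), mul_div_cancel₀ _ two_ne_zero]

/-- The characteristic function of the subordinated three-dimensional Gaussian:
`∫_{ℝ³} e^{i ξ·x} P_t(x) dx = exp(−t(√(|ξ|² + m²) − m))` for every `ξ ∈ ℝ³`. -/
theorem characteristic_function_subordinated_gaussian (m t : ℝ) (hm : 0 ≤ m) (ht : 0 < t)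
    (ξ : EuclideanSpace ℝ (Fin 3)) :
    ∫ x : EuclideanSpace ℝ (Fin 3),
        Complex.exp (Complex.I * (⟪ξ, x⟫ : ℝ)) * (subordinatedGaussianDensity m t x : ℂ)
      = (Real.exp (-(t * (Real.sqrt (‖ξ‖ ^ 2 + m ^ 2) - m))) : ℂ) :=
  characteristic_function_subordinated_gaussian_general m t ht ξ
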